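/- arXiv:1812.06310 — 4 statements merged into one kernel-verified Lean document; each statement's English description precedes it below -/
import Mathlib

section
/- Let g(x) = a(ν) · x · ₂F₁(1/2, 1/2; ν/2; x²) with a(ν) = (ν-2) Γ((ν-1)/2)² / (2 Γ(ν/2)²), ν > 2. Then for all x ∈ [-1,1], |g(x)| ≤ |x|, i.e., the correlation of the t process is dominated in absolute value by the underlying Gaussian correlation. -/
/-!
Put `c = ν/2`. The series `₂F₁(1/2, 1/2; c; y)` has nonnegative coefficients, so on `[0, 1]` it is
bounded by its partial sums at `y = 1`, and `a(ν)` is the reciprocal of the Gauss sum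
`₂F₁(1/2, 1/2; c; 1) = B(1/2, c - 1) / B(1/2, c - 1/2)`. Only the inequality
`∑ₖ (a)ₖ (b)ₖ / ((c)ₖ k!) ≤ B(b, c - a - b) / B(b, c - b)` is needed. It follows from Euler's
integral `(b)ₖ / (c)ₖ = ∫₀¹ xᵏ x^(b-1) (1-x)^(c-b-1) dx / B(b, c - b)`: summing under the integral
produces the binomial series `∑ₖ (a)ₖ xᵏ / k! = (1 - x)^(-a)`.
-/

open Real

/-- Pochhammer symbol `(s)_k`. -/
noncomputable def poch (s : ℝ) (k : ℕ) : ℝ := (ascPochhammer ℝ k).eval s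

/-- Gauss hypergeometric function `₂F₁(a,b;c;x)` as a series. -/
noncomputable def hyp2F1 (a b c x : ℝ) : ℝ :=
  ∑' k : ℕ, poch a k * poch b k / poch c k * x ^ k / (Nat.factorial k)

/-- The factor `a(ν) = (ν-2)Γ((ν-1)/2)²/(2Γ(ν/2)²)`. -/
noncomputable def acoef (ν : ℝ) : ℝ :=
  (ν - 2) * Real.Gamma ((ν-1)/2) ^ 2 / (2 * Real.Gamma (ν/2) ^ 2)

/-- The correlation map of the standardized `t` process. -/
noncomputable def gfun (ν x : ℝ) : ℝ := acoef ν * x * hyp2F1 (1/2) (1/2) (ν/2) (x^2)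

open Finset MeasureTheory ProbabilityTheory

lemma poch_succ (s : ℝ) (k : ℕ) : poch s (k + 1) = poch s k * (s + k) := by
  simp [poch, ascPochhammer_succ_eval]

lemma poch_pos {s : ℝ} (hs : 0 < s) (k : ℕ) : 0 < poch s k := by
  induction k with
  | zero => simp [poch]
  | succ k ih => rw [poch_succ]; positivity

lemma Gamma_add_nat_eq_poch_mul_Gamma {s : ℝ} (hs : 0 < s) (k : ℕ) :
    Gamma (s + k) = poch s k * Gamma s := by
  induction k with
  | zero => simp [poch]
  | succ k ih =>
    rw [Nat.cast_succ, ← add_assoc, Gamma_add_one (by positivity : 0 < s + k).ne', ih, poch_succ]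
    ring

lemma ringChoose_add_sub_one_eq_poch_div_factorial (a : ℝ) (n : ℕ) :
    Ring.choose (a + n - 1) n = poch a n / n.factorial := by
  rw [← Ring.multichoose_eq, eq_div_iff (by positivity), mul_comm, ← nsmul_eq_mul,
    Ring.factorial_nsmul_multichoose_eq_ascPochhammer, poch,
    Polynomial.ascPochhammer_smeval_eq_eval]

lemma hasSum_poch_div_factorial_mul_pow (a : ℝ) {x : ℝ} (hx : |x| < 1) :
    HasSum (fun n ↦ poch a n / n.factorial * x ^ n) ((1 - x) ^ (-a)) := by
  have h := (one_div_one_sub_rpow_hasFPowerSeriesOnBall_zero a).hasSum (y := x)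
    (by simpa [enorm_eq_nnnorm, ← NNReal.coe_lt_coe] using hx)
  rw [rpow_neg (by linarith [le_abs_self x]), inv_eq_one_div]
  simpa [FormalMultilinearSeries.ofScalars, ringChoose_add_sub_one_eq_poch_div_factorial] using h

lemma sum_range_poch_div_factorial_mul_pow_le {a x : ℝ} (ha : 0 < a) (hx0 : 0 ≤ x) (hx1 : x < 1)
    (N : ℕ) : ∑ n ∈ range N, poch a n / n.factorial * x ^ n ≤ (1 - x) ^ (-a) :=
  sum_le_hasSum _ (fun n _ ↦ by have := poch_pos ha n; positivity)
    (hasSum_poch_div_factorial_mul_pow a (by rwa [abs_of_nonneg hx0]))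

lemma ofReal_rpow_mul_one_sub_rpow {u v x : ℝ} (hx : x ∈ Set.Icc (0 : ℝ) 1) :
    (((x ^ (u - 1) * (1 - x) ^ (v - 1) : ℝ)) : ℂ)
      = (x : ℂ) ^ ((u : ℂ) - 1) * (1 - (x : ℂ)) ^ ((v : ℂ) - 1) := by
  have h1x : 0 ≤ 1 - x := by linarith [hx.2]
  push_cast [Complex.ofReal_cpow hx.1, Complex.ofReal_cpow h1x]
  rfl

lemma intervalIntegrable_rpow_mul_one_sub_rpow {u v : ℝ} (hu : 0 < u) (hv : 0 < v) :
    IntervalIntegrable (fun x : ℝ ↦ x ^ (u - 1) * (1 - x) ^ (v - 1)) volume 0 1 := by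
  have h := Complex.betaIntegral_convergent (u := u) (v := v) (by simpa) (by simpa)
  rw [intervalIntegrable_iff_integrableOn_Ioc_of_le zero_le_one] at h ⊢
  refine IntegrableOn.congr_fun h.re (fun x hx ↦ ?_) measurableSet_Ioc
  rw [← ofReal_rpow_mul_one_sub_rpow ⟨hx.1.le, hx.2⟩]; rfl

lemma integral_rpow_mul_one_sub_rpow {u v : ℝ} (hu : 0 < u) (hv : 0 < v) :
    ∫ x in (0 : ℝ)..1, x ^ (u - 1) * (1 - x) ^ (v - 1) = beta u v := by
  have h : Complex.betaIntegral u v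
      = ((∫ x in (0 : ℝ)..1, x ^ (u - 1) * (1 - x) ^ (v - 1) : ℝ) : ℂ) := by
    rw [Complex.betaIntegral, ← intervalIntegral.integral_ofReal]
    refine intervalIntegral.integral_congr fun x hx ↦ ?_
    rw [Set.uIcc_of_le zero_le_one] at hx
    exact (ofReal_rpow_mul_one_sub_rpow hx).symm
  rw [beta_eq_betaIntegralReal u v hu hv, h, Complex.ofReal_re]

lemma poch_div_poch_eq_integral {b c : ℝ} (hb : 0 < b) (hbc : b < c) (k : ℕ) :
    poch b k / poch c k
      = (∫ x in (0 : ℝ)..1, x ^ k * (x ^ (b - 1) * (1 - x) ^ (c - b - 1))) / beta b (c - b) := by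
  have hint : ∫ x in (0 : ℝ)..1, x ^ k * (x ^ (b - 1) * (1 - x) ^ (c - b - 1))
      = beta (b + k) (c - b) := by
    rw [← integral_rpow_mul_one_sub_rpow (by positivity) (by linarith)]
    refine intervalIntegral.integral_congr_ae (ae_of_all _ fun x hx ↦ ?_)
    rw [Set.uIoc_of_le zero_le_one] at hx
    rw [← mul_assoc, ← rpow_natCast, ← rpow_add hx.1, add_sub_right_comm, add_comm (k : ℝ)]
  have hc : 0 < c := hb.trans hbc
  rw [hint, beta, beta, show b + k + (c - b) = c + k by ring, add_sub_cancel,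
    Gamma_add_nat_eq_poch_mul_Gamma hb, Gamma_add_nat_eq_poch_mul_Gamma hc]
  have := poch_pos hc k
  have := Gamma_pos_of_pos hb
  have := Gamma_pos_of_pos hc
  have := Gamma_pos_of_pos (sub_pos.2 hbc)
  field_simp

lemma sum_range_hyp2F1_coeff_le {a b c : ℝ} (ha : 0 < a) (hb : 0 < b) (habc : a + b < c)
    (N : ℕ) :
    ∑ k ∈ range N, poch a k * poch b k / poch c k / k.factorial
      ≤ beta b (c - a - b) / beta b (c - b) := by
  have hbc : b < c := by linarith
  set w : ℝ → ℝ := fun x ↦ x ^ (b - 1) * (1 - x) ^ (c - b - 1) with hw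
  have hterm : ∀ k ∈ range N, IntervalIntegrable
      (fun x ↦ poch a k / k.factorial * (x ^ k * w x)) volume 0 1 := fun k _ ↦
    ((intervalIntegrable_rpow_mul_one_sub_rpow hb (sub_pos.2 hbc)).continuousOn_mul
      (continuous_pow k).continuousOn).const_mul _
  have hbound : ∀ x ∈ Set.Ioo (0 : ℝ) 1, ∑ k ∈ range N, poch a k / k.factorial * (x ^ k * w x)
      ≤ x ^ (b - 1) * (1 - x) ^ (c - a - b - 1) := by
    intro x hx
    have h1x : 0 < 1 - x := sub_pos.2 hx.2
    calc ∑ k ∈ range N, poch a k / k.factorial * (x ^ k * w x)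
        = (∑ k ∈ range N, poch a k / k.factorial * x ^ k) * w x := by
          rw [sum_mul]; simp only [mul_assoc]
      _ ≤ (1 - x) ^ (-a) * w x := by
          gcongr
          · exact mul_nonneg (rpow_nonneg hx.1.le _) (rpow_nonneg h1x.le _)
          · exact sum_range_poch_div_factorial_mul_pow_le ha hx.1.le hx.2 N
      _ = x ^ (b - 1) * (1 - x) ^ (c - a - b - 1) := by
          rw [hw, mul_left_comm, ← rpow_add h1x]; ring_nf
  calc ∑ k ∈ range N, poch a k * poch b k / poch c k / k.factorial
      = (∑ k ∈ range N, ∫ x in (0 : ℝ)..1, poch a k / k.factorial * (x ^ k * w x))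
          / beta b (c - b) := by
        rw [sum_div]
        refine sum_congr rfl fun k _ ↦ ?_
        rw [intervalIntegral.integral_const_mul, mul_div_assoc, poch_div_poch_eq_integral hb hbc]
        ring
    _ = (∫ x in (0 : ℝ)..1, ∑ k ∈ range N, poch a k / k.factorial * (x ^ k * w x))
          / beta b (c - b) := by
        rw [intervalIntegral.integral_finsetSum hterm]
    _ ≤ (∫ x in (0 : ℝ)..1, x ^ (b - 1) * (1 - x) ^ (c - a - b - 1)) / beta b (c - b) := by
        gcongr
        · exact (beta_pos hb (sub_pos.2 hbc)).le
        · exact intervalIntegral.integral_mono_on_of_le_Ioo zero_le_one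
            (by simpa only [Finset.sum_fn] using IntervalIntegrable.sum _ hterm)
            (intervalIntegrable_rpow_mul_one_sub_rpow hb (by linarith)) hbound
    _ = beta b (c - a - b) / beta b (c - b) := by
        rw [integral_rpow_mul_one_sub_rpow hb (by linarith)]

lemma hyp2F1_term_nonneg {a b c y : ℝ} (ha : 0 < a) (hb : 0 < b) (hc : 0 < c) (hy : 0 ≤ y)
    (k : ℕ) : 0 ≤ poch a k * poch b k / poch c k * y ^ k / k.factorial := by
  have := poch_pos ha k
  have := poch_pos hb k
  have := poch_pos hc k
  positivity

lemma hyp2F1_nonneg {a b c y : ℝ} (ha : 0 < a) (hb : 0 < b) (hc : 0 < c) (hy : 0 ≤ y) :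
    0 ≤ hyp2F1 a b c y :=
  tsum_nonneg (hyp2F1_term_nonneg ha hb hc hy)

lemma hyp2F1_le_beta_div_beta {a b c y : ℝ} (ha : 0 < a) (hb : 0 < b) (habc : a + b < c)
    (hy0 : 0 ≤ y) (hy1 : y ≤ 1) : hyp2F1 a b c y ≤ beta b (c - a - b) / beta b (c - b) := by
  have hc : 0 < c := by linarith
  refine Real.tsum_le_of_sum_range_le (hyp2F1_term_nonneg ha hb hc hy0) fun N ↦
    (sum_le_sum fun k _ ↦ ?_).trans (sum_range_hyp2F1_coeff_le ha hb habc N)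
  calc poch a k * poch b k / poch c k * y ^ k / k.factorial
      ≤ poch a k * poch b k / poch c k * 1 / k.factorial := by
        have := poch_pos ha k
        have := poch_pos hb k
        have := poch_pos hc k
        gcongr
        exact pow_le_one₀ hy0 hy1
    _ = poch a k * poch b k / poch c k / k.factorial := by rw [mul_one]

lemma acoef_eq_beta_div_beta {ν : ℝ} (hν : 2 < ν) :
    acoef ν = beta (1 / 2) (ν / 2 - 1 / 2) / beta (1 / 2) (ν / 2 - 1) := by
  have hGamma : Gamma (ν / 2) = (ν / 2 - 1) * Gamma (ν / 2 - 1) := by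
    rw [← Gamma_add_one (by linarith), sub_add_cancel]
  have := Gamma_pos_of_pos (by norm_num : (0 : ℝ) < 1 / 2)
  have := Gamma_pos_of_pos (by linarith : 0 < ν / 2 - 1)
  have := Gamma_pos_of_pos (by linarith : 0 < ν / 2 - 1 / 2)
  rw [acoef, beta, beta, show 1 / 2 + (ν / 2 - 1 / 2) = ν / 2 by ring,
    show 1 / 2 + (ν / 2 - 1) = ν / 2 - 1 / 2 by ring, show (ν - 1) / 2 = ν / 2 - 1 / 2 by ring,
    hGamma]
  have : 0 < ν / 2 - 1 := by linarith
  field_simp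

/-- The correlation of the `t` process is dominated by the underlying Gaussian correlation:
`|g(x)| ≤ |x|` on `[-1,1]`. -/
theorem stmt4 (ν : ℝ) (hν : 2 < ν) :
    ∀ x ∈ Set.Icc (-1:ℝ) 1, |gfun ν x| ≤ |x| := by
  intro x hx
  have hx2 : x ^ 2 ≤ 1 := sq_le_one_iff_abs_le_one x |>.2 (abs_le.2 hx)
  have hF := hyp2F1_le_beta_div_beta (c := ν / 2) one_half_pos one_half_pos (by linarith)
    (sq_nonneg x) hx2
  rw [show ν / 2 - 1 / 2 - 1 / 2 = ν / 2 - 1 by ring] at hF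
  have hF0 := hyp2F1_nonneg one_half_pos one_half_pos (by linarith : 0 < ν / 2) (sq_nonneg x)
  have hB₁ := beta_pos one_half_pos (by linarith : 0 < ν / 2 - 1 / 2)
  have hB₂ := beta_pos one_half_pos (by linarith : 0 < ν / 2 - 1)
  have hA0 : 0 ≤ acoef ν := by rw [acoef_eq_beta_div_beta hν]; positivity
  have hA : acoef ν * hyp2F1 (1 / 2) (1 / 2) (ν / 2) (x ^ 2) ≤ 1 :=
    calc _ ≤ acoef ν * (beta (1 / 2) (ν / 2 - 1) / beta (1 / 2) (ν / 2 - 1 / 2)) :=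
          mul_le_mul_of_nonneg_left hF hA0
      _ = 1 := by
        rw [acoef_eq_beta_div_beta hν, div_mul_div_comm, mul_comm, div_self (by positivity)]
  rw [gfun, mul_right_comm, abs_mul, abs_of_nonneg (mul_nonneg hA0 hF0)]
  exact mul_le_of_le_one_left (abs_nonneg x) hA
end

section
/- For 0 < λ ≤ 1: the function a(ν) = (ν-2) Γ((ν-1)/2)² / (2 Γ(ν/2)²) satisfies 0 < a(ν) ≤ 1 for all ν > 2, and lim_{ν→∞} a(ν) = 1. -/
open Real

/-!
With `x = (ν - 1)/2` we have `a(ν) = (x - 1/2) Γ(x)² / Γ(x + 1/2)²`. Log-convexity of `Γ` at the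
midpoints of `[x, x + 1]` and `[x - 1/2, x + 1/2]`, together with `Γ(y + 1) = y Γ(y)`, gives
`Γ(x + 1/2)² ≤ x Γ(x)²` and `(x - 1/2) Γ(x)² ≤ Γ(x + 1/2)²`, that is
`(ν - 2)/(ν - 1) ≤ a(ν) ≤ 1`; the lower bound tends to `1`.
-/

namespace Real

theorem Gamma_midpoint_sq_le_mul {s t : ℝ} (hs : 0 < s) (ht : 0 < t) :
    Gamma ((s + t) / 2) ^ 2 ≤ Gamma s * Gamma t := by
  have h := Gamma_mul_add_mul_le_rpow_Gamma_mul_rpow_Gamma hs ht one_half_pos one_half_pos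
    (add_halves 1)
  rw [← sqrt_eq_rpow, ← sqrt_eq_rpow, ← sqrt_mul (Gamma_pos_of_pos hs).le,
    show 1 / 2 * s + 1 / 2 * t = (s + t) / 2 by ring] at h
  exact (le_sqrt' (Gamma_pos_of_pos (by positivity))).mp h

theorem Gamma_add_half_sq_le {x : ℝ} (hx : 0 < x) : Gamma (x + 1 / 2) ^ 2 ≤ x * Gamma x ^ 2 := by
  have h := Gamma_midpoint_sq_le_mul hx (by linarith : 0 < x + 1)
  rw [Gamma_add_one hx.ne', show (x + (x + 1)) / 2 = x + 1 / 2 by ring] at h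
  linarith

theorem mul_Gamma_sq_le_Gamma_add_half_sq {x : ℝ} (hx : 1 / 2 < x) :
    (x - 1 / 2) * Gamma x ^ 2 ≤ Gamma (x + 1 / 2) ^ 2 := by
  have hx' : 0 < x - 1 / 2 := by linarith
  have h := Gamma_midpoint_sq_le_mul hx' (by linarith : 0 < x + 1 / 2)
  rw [show (x - 1 / 2 + (x + 1 / 2)) / 2 = x by ring] at h
  have hrec : Gamma (x + 1 / 2) = (x - 1 / 2) * Gamma (x - 1 / 2) := by
    rw [← Gamma_add_one hx'.ne']
    ring_nf
  calc (x - 1 / 2) * Gamma x ^ 2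
      ≤ (x - 1 / 2) * (Gamma (x - 1 / 2) * Gamma (x + 1 / 2)) := by gcongr
    _ = Gamma (x + 1 / 2) ^ 2 := by rw [hrec]; ring

end Real

theorem acoef_eq (ν : ℝ) :
    acoef ν = ((ν - 1) / 2 - 1 / 2) * Gamma ((ν - 1) / 2) ^ 2 / Gamma ((ν - 1) / 2 + 1 / 2) ^ 2 := by
  rw [acoef, show (ν - 1) / 2 + 1 / 2 = ν / 2 by ring]
  ring

theorem acoef_pos {ν : ℝ} (hν : 2 < ν) : 0 < acoef ν := by
  rw [acoef_eq]
  exact div_pos (mul_pos (by linarith) (pow_pos (Gamma_pos_of_pos (by linarith)) 2))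
    (pow_pos (Gamma_pos_of_pos (by linarith)) 2)

theorem acoef_le_one {ν : ℝ} (hν : 2 < ν) : acoef ν ≤ 1 := by
  rw [acoef_eq, div_le_one (pow_pos (Gamma_pos_of_pos (by linarith)) 2)]
  exact mul_Gamma_sq_le_Gamma_add_half_sq (by linarith)

theorem sub_two_div_sub_one_le_acoef {ν : ℝ} (hν : 2 < ν) : (ν - 2) / (ν - 1) ≤ acoef ν := by
  have hx : 0 < (ν - 1) / 2 := by linarith
  rw [acoef_eq, le_div_iff₀ (pow_pos (Gamma_pos_of_pos (by linarith)) 2),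
    div_mul_eq_mul_div, div_le_iff₀ (by linarith)]
  calc (ν - 2) * Gamma ((ν - 1) / 2 + 1 / 2) ^ 2
      ≤ (ν - 2) * ((ν - 1) / 2 * Gamma ((ν - 1) / 2) ^ 2) :=
        mul_le_mul_of_nonneg_left (Gamma_add_half_sq_le hx) (by linarith)
    _ = ((ν - 1) / 2 - 1 / 2) * Gamma ((ν - 1) / 2) ^ 2 * (ν - 1) := by ring

theorem tendsto_sub_two_div_sub_one_atTop :
    Filter.Tendsto (fun ν : ℝ => (ν - 2) / (ν - 1)) Filter.atTop (nhds 1) := by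
  have h : Filter.Tendsto (fun ν : ℝ => 1 - (ν - 1)⁻¹) Filter.atTop (nhds (1 - 0)) :=
    tendsto_const_nhds.sub (tendsto_inv_atTop_zero.comp
      (Filter.tendsto_atTop_add_const_right _ (-1) Filter.tendsto_id))
  rw [sub_zero] at h
  refine h.congr' ?_
  filter_upwards [Filter.eventually_gt_atTop 1] with ν hν
  field_simp [(by linarith : ν - 1 ≠ 0)]
  ring

/-- `0 < a(ν) ≤ 1` for all `ν > 2`, and `a(ν) → 1` as `ν → ∞`. -/
theorem stmt7 :
    (∀ ν : ℝ, 2 < ν → 0 < acoef ν ∧ acoef ν ≤ 1) ∧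
    Filter.Tendsto acoef Filter.atTop (nhds 1) := by
  refine ⟨fun ν hν => ⟨acoef_pos hν, acoef_le_one hν⟩, ?_⟩
  refine tendsto_of_tendsto_of_tendsto_of_le_of_le' tendsto_sub_two_div_sub_one_atTop
    tendsto_const_nhds ?_ ?_
  · filter_upwards [Filter.eventually_gt_atTop 2] with ν hν
    exact sub_two_div_sub_one_le_acoef hν
  · filter_upwards [Filter.eventually_gt_atTop 2] with ν hν
    exact acoef_le_one hν
end

section
/- For the Gaussian distribution with mean μ and standard deviation σ, the continuous ranked probability score at a verifying observation y equals CRPS(F,y) = σ[ z(2Φ(z) - 1) + 2φ(z) - 1/√π ], where z = (y-μ)/σ and φ, Φ are the standard normal pdf and cdf. -/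
open Real MeasureTheory Set Filter Topology

noncomputable def crpsG (t : ℝ) : ℝ := Real.exp (-t^2/2) / Real.sqrt (2*π)

lemma crpsG_pos (t : ℝ) : 0 < crpsG t :=
  div_pos (Real.exp_pos _) (Real.sqrt_pos.2 (by positivity))

lemma crpsG_eq (t : ℝ) : crpsG t = Real.exp (-(1/2 : ℝ) * t^2) / Real.sqrt (2*π) := by
  unfold crpsG; ring_nf

lemma integrable_crpsG : Integrable crpsG := by
  have h := (integrable_exp_neg_mul_sq (by norm_num : (0:ℝ) < 1/2)).div_const (Real.sqrt (2*π))
  exact h.congr (by filter_upwards with t using (crpsG_eq t).symm)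

lemma integral_crpsG : ∫ t, crpsG t = 1 := by
  have h : ∫ t : ℝ, crpsG t = (∫ t : ℝ, Real.exp (-(1/2:ℝ) * t^2)) / Real.sqrt (2*π) := by
    rw [← integral_div]; exact integral_congr_ae (by filter_upwards with t using crpsG_eq t)
  rw [h, integral_gaussian]
  rw [show π / (1/2 : ℝ) = 2 * π by ring]
  exact div_self (Real.sqrt_ne_zero'.2 (by positivity))

lemma hasDerivAt_crpsG (t : ℝ) : HasDerivAt crpsG (-t * crpsG t) t := by
  have h1 : HasDerivAt (fun t : ℝ => -t^2/2) (-t) t := by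
    have := ((hasDerivAt_pow 2 t).neg).div_const 2
    exact this.congr_deriv (by norm_num; ring)
  have h2 := (h1.exp).div_const (Real.sqrt (2*π))
  exact h2.congr_deriv (by unfold crpsG; ring)

lemma continuous_crpsG : Continuous crpsG := by
  unfold crpsG; continuity

lemma tendsto_crpsG_atTop : Tendsto crpsG atTop (𝓝 0) := by
  have h1 : Tendsto (fun t : ℝ => -t^2/2) atTop atBot := by
    apply Tendsto.atBot_div_const (by norm_num : (0:ℝ) < 2)
    rw [tendsto_neg_atBot_iff]
    exact tendsto_pow_atTop (by norm_num)
  have h3 := (Real.tendsto_exp_atBot.comp h1).div_const (Real.sqrt (2*π))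
  rw [zero_div] at h3
  exact h3.congr fun t => rfl

lemma crpsG_neg (t : ℝ) : crpsG (-t) = crpsG t := by unfold crpsG; ring_nf

lemma crpsG_sqrt2 (t : ℝ) :
    (1/Real.sqrt π) * (Real.sqrt 2 * crpsG (Real.sqrt 2 * t)) = 2 * crpsG t ^ 2 := by
  unfold crpsG
  have h2 : (Real.sqrt 2 * t)^2 = 2 * t^2 := by
    rw [mul_pow, Real.sq_sqrt (by norm_num : (0:ℝ) ≤ 2)]
  have hexp : Real.exp (-t^2/2) ^ 2 = Real.exp (-(2*t^2)/2) := by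
    rw [← Real.exp_nat_mul]; ring_nf
  have hsπ : (0:ℝ) < Real.sqrt π := Real.sqrt_pos.2 Real.pi_pos
  have hs2 : (0:ℝ) < Real.sqrt 2 := by positivity
  have hsq2 : Real.sqrt 2 ^ 2 = 2 := Real.sq_sqrt (by norm_num)
  have hsqπ : Real.sqrt π ^ 2 = π := Real.sq_sqrt Real.pi_pos.le
  rw [h2, Real.sqrt_mul (by norm_num : (0:ℝ) ≤ 2) π, div_pow, hexp, mul_pow, hsq2, hsqπ]
  have hE := Real.exp_pos (-(2*t^2)/2)
  field_simp
  ring_nf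
  linear_combination -hsqπ

lemma tendsto_neg_crpsG_atTop : Tendsto (fun t => -crpsG t) atTop (𝓝 0) := by
  simpa using tendsto_crpsG_atTop.neg

lemma moment_deriv (a : ℝ) : ∀ x ∈ Set.Ici a, HasDerivAt (fun s => -crpsG s) (x * crpsG x) x := by
  intro x _
  have := (hasDerivAt_crpsG x).neg
  exact this.congr_deriv (by ring)

lemma moment_integral (a : ℝ) (ha : 0 ≤ a) : (∫ s in Set.Ioi a, s * crpsG s) = crpsG a := by
  have h := integral_Ioi_of_hasDerivAt_of_nonneg' (moment_deriv a)
    (fun x hx => mul_nonneg (le_trans ha (le_of_lt hx)) (crpsG_pos x).le)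
    tendsto_neg_crpsG_atTop
  simpa using h

lemma moment_integrable (a : ℝ) (ha : 0 ≤ a) :
    IntegrableOn (fun s => s * crpsG s) (Set.Ioi a) :=
  integrableOn_Ioi_deriv_of_nonneg' (moment_deriv a)
    (fun x hx => mul_nonneg (le_trans ha (le_of_lt hx)) (crpsG_pos x).le)
    tendsto_neg_crpsG_atTop

section Phi
variable {Φ : ℝ → ℝ} (hΦ : ∀ x, Φ x = ∫ t in Set.Iic x, crpsG t)
include hΦ

lemma hasDerivAt_Phi (x : ℝ) : HasDerivAt Φ (crpsG x) x := by
  have key : ∀ u : ℝ, Φ u = (∫ t in Set.Iic (0:ℝ), crpsG t) + ∫ t in (0:ℝ)..u, crpsG t := by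
    intro u
    rw [hΦ u, ← intervalIntegral.integral_Iic_sub_Iic
      (integrable_crpsG.integrableOn) (integrable_crpsG.integrableOn)]
    ring
  have h2 : HasDerivAt (fun u => (∫ t in Set.Iic (0:ℝ), crpsG t) + ∫ t in (0:ℝ)..u, crpsG t)
      (crpsG x) x := by
    have := intervalIntegral.integral_hasDerivAt_right (a := 0) (b := x)
      (integrable_crpsG.intervalIntegrable)
      (continuous_crpsG.stronglyMeasurableAtFilter _ _)
      (continuous_crpsG.continuousAt (x := x))
    simpa using (this.const_add (∫ t in Set.Iic (0:ℝ), crpsG t))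
  exact (funext key : Φ = _) ▸ h2

lemma Phi_nonneg (x : ℝ) : 0 ≤ Φ x := by
  rw [hΦ x]
  exact setIntegral_nonneg measurableSet_Iic fun t _ => (crpsG_pos t).le

lemma one_sub_Phi (x : ℝ) : 1 - Φ x = ∫ t in Set.Ioi x, crpsG t := by
  rw [hΦ x, ← integral_crpsG,
    ← intervalIntegral.integral_Iic_add_Ioi (b := x) integrable_crpsG.integrableOn
      integrable_crpsG.integrableOn]
  ring

lemma Phi_le_one (x : ℝ) : Φ x ≤ 1 := by
  have h := one_sub_Phi hΦ x
  have : 0 ≤ ∫ t in Set.Ioi x, crpsG t :=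
    setIntegral_nonneg measurableSet_Ioi fun t _ => (crpsG_pos t).le
  linarith

lemma Phi_neg (x : ℝ) : Φ (-x) = 1 - Φ x := by
  rw [hΦ (-x), one_sub_Phi hΦ x]
  have h := integral_comp_neg_Iic (-x) crpsG
  rw [neg_neg] at h
  rw [← h]
  exact integral_congr_ae (by filter_upwards with t using (crpsG_neg t).symm)

lemma Phi_tail (t : ℝ) (ht : 1 ≤ t) : 1 - Φ t ≤ crpsG t / t := by
  have ht0 : (0:ℝ) < t := lt_of_lt_of_le one_pos ht
  rw [one_sub_Phi hΦ t]
  have hint := moment_integrable t ht0.le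
  have hle : ∀ s ∈ Set.Ioi t, crpsG s ≤ (s * crpsG s) / t := by
    intro s hs
    rw [le_div_iff₀ ht0]
    have hst : t ≤ s := (le_of_lt hs)
    nlinarith [crpsG_pos s]
  calc (∫ s in Set.Ioi t, crpsG s) ≤ ∫ s in Set.Ioi t, (s * crpsG s) / t :=
        setIntegral_mono_on integrable_crpsG.integrableOn (hint.div_const t)
          measurableSet_Ioi hle
    _ = (∫ s in Set.Ioi t, s * crpsG s) / t := integral_div t _
    _ = crpsG t / t := by rw [moment_integral t ht0.le]

lemma tendsto_one_sub_Phi : Tendsto (fun t => 1 - Φ t) atTop (𝓝 0) := by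
  have h0 : ∀ᶠ t in atTop, 0 ≤ 1 - Φ t := by
    filter_upwards [eventually_ge_atTop (1:ℝ)] with t _ using sub_nonneg.2 (Phi_le_one hΦ t)
  have h1 : ∀ᶠ t in atTop, 1 - Φ t ≤ crpsG t := by
    filter_upwards [eventually_ge_atTop (1:ℝ)] with t ht
    exact (Phi_tail hΦ t ht).trans (div_le_self (crpsG_pos t).le ht)
  exact squeeze_zero' h0 h1 tendsto_crpsG_atTop

lemma tendsto_Phi_atTop : Tendsto Φ atTop (𝓝 1) := by
  have h := (tendsto_one_sub_Phi hΦ).const_sub 1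
  simp only [sub_sub_cancel] at h
  simpa using h

lemma limit1 : Tendsto (fun t => t * (1 - Φ t)^2) atTop (𝓝 0) := by
  have h0 : ∀ᶠ t in atTop, 0 ≤ t * (1 - Φ t)^2 := by
    filter_upwards [eventually_ge_atTop (1:ℝ)] with t ht
    have h := sub_nonneg.2 (Phi_le_one hΦ t)
    positivity
  have h1 : ∀ᶠ t in atTop, t * (1 - Φ t)^2 ≤ crpsG t ^ 2 := by
    filter_upwards [eventually_ge_atTop (1:ℝ)] with t ht
    have ht0 : (0:ℝ) < t := lt_of_lt_of_le one_pos ht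
    have hle : (1 - Φ t)^2 ≤ (crpsG t / t)^2 :=
      pow_le_pow_left₀ (sub_nonneg.2 (Phi_le_one hΦ t)) (Phi_tail hΦ t ht) 2
    calc t * (1 - Φ t)^2 ≤ t * (crpsG t / t)^2 := mul_le_mul_of_nonneg_left hle ht0.le
      _ = crpsG t ^ 2 / t := by field_simp
      _ ≤ crpsG t ^ 2 := div_le_self (by positivity) ht
  have h2 : Tendsto (fun t => crpsG t ^ 2) atTop (𝓝 0) := by
    have := tendsto_crpsG_atTop.mul tendsto_crpsG_atTop
    simpa [pow_two] using this
  exact squeeze_zero' h0 h1 h2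

end Phi

noncomputable def crpsK (Φ : ℝ → ℝ) (t : ℝ) : ℝ :=
  t * (1 - Φ t)^2 - 2 * crpsG t * (1 - Φ t) - (1/Real.sqrt π) * Φ (Real.sqrt 2 * t)

section Key
variable {Φ : ℝ → ℝ} (hΦ : ∀ x, Φ x = ∫ t in Set.Iic x, crpsG t)
include hΦ

lemma hasDerivAt_K (t : ℝ) : HasDerivAt (crpsK Φ) ((1 - Φ t)^2) t := by
  have h1 : HasDerivAt (fun s => 1 - Φ s) (-crpsG t) t := (hasDerivAt_Phi hΦ t).const_sub 1
  have hA := (hasDerivAt_id t).mul (h1.pow 2)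
  have hB := ((hasDerivAt_crpsG t).const_mul 2).mul h1
  have hinner : HasDerivAt (fun s : ℝ => Real.sqrt 2 * s) (Real.sqrt 2) t := by
    simpa using (hasDerivAt_id t).const_mul (Real.sqrt 2)
  have hC : HasDerivAt (fun s => Φ (Real.sqrt 2 * s)) (crpsG (Real.sqrt 2 * t) * Real.sqrt 2) t :=
    (hasDerivAt_Phi hΦ (Real.sqrt 2 * t)).comp t hinner
  have htot := (hA.sub hB).sub (hC.const_mul (1/Real.sqrt π))
  refine htot.congr_deriv (Eq.symm ?_)
  have hid := crpsG_sqrt2 t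
  simp only [id_eq, pow_one, Pi.pow_apply]
  linear_combination hid

lemma tendsto_K : Tendsto (crpsK Φ) atTop (𝓝 (-(1/Real.sqrt π))) := by
  have h2 : Tendsto (fun t => 2 * crpsG t * (1 - Φ t)) atTop (𝓝 0) := by
    simpa using (tendsto_crpsG_atTop.const_mul 2).mul (tendsto_one_sub_Phi hΦ)
  have h3 : Tendsto (fun t => (1/Real.sqrt π) * Φ (Real.sqrt 2 * t)) atTop
      (𝓝 ((1/Real.sqrt π) * 1)) := by
    apply Tendsto.const_mul
    exact (tendsto_Phi_atTop hΦ).comp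
      (Tendsto.const_mul_atTop (by positivity : (0:ℝ) < Real.sqrt 2) tendsto_id)
  have h4 := ((limit1 hΦ).sub h2).sub h3
  have h5 : (0:ℝ) - 0 - (1/Real.sqrt π * 1) = -(1/Real.sqrt π) := by ring
  rw [h5] at h4
  exact h4.congr fun t => rfl

lemma key_integral (z : ℝ) :
    (∫ s in Set.Ioi z, (1 - Φ s)^2) = -(1/Real.sqrt π) - crpsK Φ z :=
  integral_Ioi_of_hasDerivAt_of_nonneg' (fun x _ => hasDerivAt_K hΦ x)
    (fun x _ => sq_nonneg _) (tendsto_K hΦ)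

lemma key_integrable (z : ℝ) : IntegrableOn (fun s => (1 - Φ s)^2) (Set.Ioi z) :=
  integrableOn_Ioi_deriv_of_nonneg' (fun x _ => hasDerivAt_K hΦ x)
    (fun x _ => sq_nonneg _) (tendsto_K hΦ)

end Key

lemma crps_std {Φ : ℝ → ℝ} (hΦ : ∀ x, Φ x = ∫ t in Set.Iic x, crpsG t) (z : ℝ) :
    (∫ s : ℝ, (Φ s - Set.indicator (Set.Ici z) (fun _ => (1:ℝ)) s)^2)
      = z * (2 * Φ z - 1) + 2 * crpsG z - 1/Real.sqrt π := by
  set F : ℝ → ℝ := fun s => (Φ s - Set.indicator (Set.Ici z) (fun _ => (1:ℝ)) s)^2 with hF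
  -- value on Iic z via reflection
  have hIicVal : (∫ s in Set.Iic z, (Φ s)^2) = -(1/Real.sqrt π) - crpsK Φ (-z) := by
    have h := integral_comp_neg_Iic z (fun s => (1 - Φ s)^2)
    have h2 : (∫ s in Set.Iic z, (1 - Φ (-s))^2) = ∫ s in Set.Iic z, (Φ s)^2 := by
      apply setIntegral_congr_fun measurableSet_Iic
      intro s _
      show (1 - Φ (-s))^2 = Φ s ^ 2
      rw [Phi_neg hΦ s]; ring
    rw [h2] at h
    rw [h, key_integral hΦ (-z)]
  have hIicInt : IntegrableOn (fun s => (Φ s)^2) (Set.Iic z) := by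
    have hint : IntegrableOn (fun s => (1 - Φ s)^2) (Set.Ici (-z)) :=
      (integrableOn_Ici_iff_integrableOn_Ioi).2 (key_integrable hΦ (-z))
    have h1 : Integrable ((Set.Ici (-z)).indicator (fun s => (1 - Φ s)^2)) :=
      (integrable_indicator_iff measurableSet_Ici).2 hint
    have h2 := h1.comp_neg
    have h3 : (fun x => (Set.Ici (-z)).indicator (fun s => (1 - Φ s)^2) (-x))
        = (Set.Iic z).indicator (fun x => (Φ x)^2) := by
      funext x
      by_cases hx : x ≤ z
      · have h4 : -x ∈ Set.Ici (-z) := by simpa using hx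
        rw [Set.indicator_of_mem h4, Set.indicator_of_mem (show x ∈ Set.Iic z from hx),
          Phi_neg hΦ x]
        ring
      · have h4 : -x ∉ Set.Ici (-z) := by simpa using hx
        rw [Set.indicator_of_notMem h4,
          Set.indicator_of_notMem (show x ∉ Set.Iic z from hx)]
    rw [h3] at h2
    exact (integrable_indicator_iff measurableSet_Iic).1 h2
  -- F agrees with the pieces
  have hF_Iio : Set.EqOn F (fun s => (Φ s)^2) (Set.Iio z) := by
    intro s hs
    have : s ∉ Set.Ici z := by simpa using hs.out
    simp [hF, Set.indicator_of_notMem this]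
  have hF_Ici : Set.EqOn F (fun s => (1 - Φ s)^2) (Set.Ici z) := by
    intro s hs
    rw [hF]
    simp only [Set.indicator_of_mem hs]
    ring
  have hInt1 : IntegrableOn F (Set.Iio z) :=
    ((hIicInt.mono_set Set.Iio_subset_Iic_self).congr_fun hF_Iio.symm measurableSet_Iio)
  have hInt2 : IntegrableOn F (Set.Ici z) :=
    (((integrableOn_Ici_iff_integrableOn_Ioi).2 (key_integrable hΦ z)).congr_fun
      hF_Ici.symm measurableSet_Ici)
  rw [← intervalIntegral.integral_Iio_add_Ici hInt1 hInt2]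
  have e1 : (∫ s in Set.Iio z, F s) = -(1/Real.sqrt π) - crpsK Φ (-z) := by
    rw [setIntegral_congr_fun measurableSet_Iio hF_Iio, ← integral_Iic_eq_integral_Iio, hIicVal]
  have e2 : (∫ s in Set.Ici z, F s) = -(1/Real.sqrt π) - crpsK Φ z := by
    rw [setIntegral_congr_fun measurableSet_Ici hF_Ici, integral_Ici_eq_integral_Ioi,
      key_integral hΦ z]
  rw [e1, e2]
  unfold crpsK
  rw [Phi_neg hΦ z, crpsG_neg z, show Real.sqrt 2 * -z = -(Real.sqrt 2 * z) by ring,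
    Phi_neg hΦ (Real.sqrt 2 * z)]
  ring

/-- Closed form of the CRPS for the Gaussian distribution `N(μ, σ²)`:
`CRPS(F,y) = σ[z(2Φ(z)-1) + 2φ(z) - 1/√π]` with `z = (y-μ)/σ`. -/
theorem stmt17 (μ σ y : ℝ) (hσ : 0 < σ)
    (Φ : ℝ → ℝ) (hΦ : ∀ x, Φ x = ∫ t in Set.Iic x, Real.exp (-t^2/2) / Real.sqrt (2*π)) :
    (∫ t : ℝ, (Φ ((t - μ)/σ) - Set.indicator (Set.Ici y) (fun _ => (1:ℝ)) t) ^ 2)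
      = σ * (((y - μ)/σ) * (2 * Φ ((y - μ)/σ) - 1)
          + 2 * (Real.exp (-((y - μ)/σ)^2/2) / Real.sqrt (2*π)) - 1 / Real.sqrt π) := by
  have hΦ' : ∀ x, Φ x = ∫ t in Set.Iic x, crpsG t := hΦ
  set z : ℝ := (y - μ)/σ with hz
  set F : ℝ → ℝ := fun s => (Φ s - Set.indicator (Set.Ici z) (fun _ => (1:ℝ)) s)^2 with hF
  have hpt : ∀ t : ℝ, (Φ ((t - μ)/σ) - Set.indicator (Set.Ici y) (fun _ => (1:ℝ)) t) ^ 2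
      = F ((t - μ)/σ) := by
    intro t
    have hiff : t ∈ Set.Ici y ↔ (t - μ)/σ ∈ Set.Ici z := by
      simp only [Set.mem_Ici, hz]
      rw [div_le_div_iff_of_pos_right hσ]
      constructor <;> intro h <;> linarith
    by_cases ht : t ∈ Set.Ici y
    · simp only [hF, Set.indicator_of_mem ht, Set.indicator_of_mem (hiff.1 ht)]
    · simp only [hF, Set.indicator_of_notMem ht,
        Set.indicator_of_notMem (fun h => ht (hiff.2 h))]
  have step1 : (∫ t : ℝ, (Φ ((t - μ)/σ) - Set.indicator (Set.Ici y) (fun _ => (1:ℝ)) t) ^ 2)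
      = ∫ t : ℝ, F ((t - μ)/σ) := by
    exact integral_congr_ae (by filter_upwards with t using hpt t)
  rw [step1]
  have step2 : (∫ t : ℝ, F ((t - μ)/σ)) = ∫ t : ℝ, F (t/σ) := by
    have := integral_sub_right_eq_self (μ := volume) (fun u => F (u/σ)) μ
    simpa using this
  have step3 : (∫ t : ℝ, F (t/σ)) = |σ| • ∫ t : ℝ, F t :=
    MeasureTheory.Measure.integral_comp_div F σ
  rw [step2, step3, smul_eq_mul, abs_of_pos hσ, hF, crps_std hΦ' z]
  rfl
end

section
/- For the location-scale t distribution with 4 degrees of freedom, location μ and scale σ, the CRPS at observation y equals σz[2F₄*(z) - 1] + 2[(4σ² + (y-μ)²)/(3σ)] f₄*(z) - 4σ B(1/2, 7/2)/(3 B(1/2, 2)²), where z = (y-μ)/σ, f₄* and F₄* are the standard t(4) pdf and cdf, and B is the Beta function. -/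
/-!
The standard `t₄` distribution function `F(x) = 1/2 + x (x² + 6) / (2 (x² + 4)^{3/2})` is
algebraic and satisfies `F(-x) = 1 - F(x)`. After standardising `z = (y - μ)/σ`, which scales
the CRPS by `σ`, the symmetry turns `CRPS(F, z)` into `T(-z) + T(z)`, where `T(a)` is the tail
integral of `(1 - F)²` over `(a, ∞)`. Writing `(1 - F)² = (1 - F) - F (1 - F)` with
`F (1 - F) = (3x² + 16)/(x² + 4)³` gives `T` in closed form (algebraic terms plus an `arctan`),
and `T(-z) + T(z) = √(z² + 4) - 2/√(z² + 4) - 15π/64`, where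
`15π/64 = 4 B(1/2, 7/2) / (3 B(1/2, 2)²)`.
-/

open Real MeasureTheory Filter Set Topology

noncomputable section

def crps (F : ℝ → ℝ) (y : ℝ) : ℝ :=
  ∫ t, (F t - (Ici y).indicator (fun _ => (1:ℝ)) t) ^ 2

theorem crps_comp_affine (F : ℝ → ℝ) (μ : ℝ) {σ : ℝ} (hσ : 0 < σ) (y : ℝ) :
    crps (fun t => F ((t - μ) / σ)) y = σ * crps F ((y - μ) / σ) := by
  set z := (y - μ) / σ
  set g := fun u => (F u - (Ici z).indicator (fun _ => (1:ℝ)) u) ^ 2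
  have hind (t : ℝ) : (Ici y).indicator (fun _ => (1:ℝ)) t
      = (Ici z).indicator (fun _ => 1) ((t - μ) / σ) := by
    simp only [z, indicator, mem_Ici, div_le_div_iff_of_pos_right hσ, sub_le_sub_iff_right]
  calc crps (fun t => F ((t - μ) / σ)) y
      _ = ∫ t, g ((t - μ) / σ) := by simp_rw [crps, hind]; rfl
      _ = ∫ t, g (t / σ) := integral_sub_right_eq_self (fun t => g (t / σ)) μ
      _ = σ * crps F z := by rw [Measure.integral_comp_div, abs_of_pos hσ, smul_eq_mul, crps]

theorem crps_eq_of_symmetric {F : ℝ → ℝ} (hF : ∀ x, F (-x) = 1 - F x)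
    (hint : ∀ a, IntegrableOn (fun x => (1 - F x) ^ 2) (Ioi a)) (z : ℝ) :
    crps F z = (∫ x in Ioi (-z), (1 - F x) ^ 2) + ∫ x in Ioi z, (1 - F x) ^ 2 := by
  set φ := fun t => (F t - (Ici z).indicator (fun _ => (1:ℝ)) t) ^ 2
  have hleft : EqOn φ (fun x => (1 - F (-x)) ^ 2) (Iio z) := fun x hx => by
    simp only [φ, indicator_of_notMem (notMem_Ici.2 (mem_Iio.1 hx)), hF]; ring
  have hright : EqOn φ (fun x => (1 - F x) ^ 2) (Ici z) := fun x hx => by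
    simp only [φ, indicator_of_mem hx]; ring
  have hintL : IntegrableOn (fun x => (1 - F (-x)) ^ 2) (Iio z) := (hint (-z)).comp_neg_Iio
  have hintR : IntegrableOn (fun x => (1 - F x) ^ 2) (Ici z) :=
    (integrableOn_Ici_iff_integrableOn_Ioi).2 (hint z)
  have hφ : Integrable φ := by
    rw [← integrableOn_univ, ← Iio_union_Ici (a := z)]
    exact (hintL.congr_fun hleft.symm measurableSet_Iio).union
      (hintR.congr_fun hright.symm measurableSet_Ici)
  rw [crps, ← integral_add_compl measurableSet_Iio hφ, compl_Iio,
    setIntegral_congr_fun measurableSet_Iio hleft, setIntegral_congr_fun measurableSet_Ici hright,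
    integral_Ici_eq_integral_Ioi, ← integral_Iic_eq_integral_Iio,
    integral_comp_neg_Iic z (fun x => (1 - F x) ^ 2)]

theorem sqrt_sq_add_four_pos (x : ℝ) : 0 < √(x ^ 2 + 4) := by positivity

theorem sq_sqrt_sq_add_four (x : ℝ) : √(x ^ 2 + 4) ^ 2 = x ^ 2 + 4 := sq_sqrt (by positivity)

theorem sqrt_neg_sq_add_four (x : ℝ) : √((-x) ^ 2 + 4) = √(x ^ 2 + 4) := by rw [neg_sq]

theorem abs_lt_sqrt_sq_add_four (x : ℝ) : |x| < √(x ^ 2 + 4) := by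
  rw [← sqrt_sq_eq_abs]; exact sqrt_lt_sqrt (sq_nonneg x) (by linarith)

theorem hasDerivAt_sqrt_sq_add_four (x : ℝ) :
    HasDerivAt (fun x => √(x ^ 2 + 4)) (x / √(x ^ 2 + 4)) x := by
  have h := ((hasDerivAt_pow 2 x).add_const 4).sqrt (by positivity)
  convert h using 1
  field_simp
  ring

theorem tendsto_sqrt_sq_add_four_atTop : Tendsto (fun x => √(x ^ 2 + 4)) atTop atTop :=
  tendsto_atTop_mono (fun x => (le_abs_self x).trans (abs_lt_sqrt_sq_add_four x).le) tendsto_id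

theorem tendsto_inv_sqrt_sq_add_four_atTop :
    Tendsto (fun x => 1 / √(x ^ 2 + 4)) atTop (𝓝 0) := by
  simpa only [one_div, Pi.inv_def] using tendsto_sqrt_sq_add_four_atTop.inv_tendsto_atTop

theorem tendsto_sqrt_sq_add_four_sub_atTop :
    Tendsto (fun x => √(x ^ 2 + 4) - x) atTop (𝓝 0) := by
  have h :=
    (tendsto_sqrt_sq_add_four_atTop.atTop_add_atTop tendsto_id).inv_tendsto_atTop.const_mul 4
  rw [mul_zero] at h
  refine h.congr fun x => ?_
  have hpos : 0 < √(x ^ 2 + 4) + x := by linarith [neg_abs_le x, abs_lt_sqrt_sq_add_four x]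
  simp only [Pi.inv_apply, id]
  field_simp
  linear_combination -sq_sqrt_sq_add_four x

theorem tendsto_div_sqrt_sq_add_four_atTop :
    Tendsto (fun x => x / √(x ^ 2 + 4)) atTop (𝓝 1) := by
  have h :=
    (tendsto_sqrt_sq_add_four_sub_atTop.mul tendsto_inv_sqrt_sq_add_four_atTop).const_sub 1
  rw [mul_zero, sub_zero] at h
  refine h.congr fun x => ?_
  have := sqrt_sq_add_four_pos x
  field_simp
  ring

theorem tendsto_div_sq_add_four_atTop :
    Tendsto (fun x : ℝ => x / (x ^ 2 + 4)) atTop (𝓝 0) := by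
  have h := tendsto_div_sqrt_sq_add_four_atTop.mul tendsto_inv_sqrt_sq_add_four_atTop
  rw [mul_zero] at h
  refine h.congr fun x => ?_
  have := sqrt_sq_add_four_pos x
  field_simp
  rw [sq_sqrt_sq_add_four]

def tFourPDF (x : ℝ) : ℝ := 12 / √(x ^ 2 + 4) ^ 5

def tFourCDF (x : ℝ) : ℝ := 1 / 2 + x * (x ^ 2 + 6) / (2 * √(x ^ 2 + 4) ^ 3)

theorem tFourPDF_pos (x : ℝ) : 0 < tFourPDF x := by
  have := sqrt_sq_add_four_pos x
  unfold tFourPDF; positivity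

theorem tFourPDF_neg (x : ℝ) : tFourPDF (-x) = tFourPDF x := by
  rw [tFourPDF, tFourPDF, sqrt_neg_sq_add_four]

theorem tFourCDF_neg (x : ℝ) : tFourCDF (-x) = 1 - tFourCDF x := by
  rw [tFourCDF, tFourCDF, sqrt_neg_sq_add_four]; ring

theorem hasDerivAt_tFourCDF (x : ℝ) : HasDerivAt tFourCDF (tFourPDF x) x := by
  have hq := sqrt_sq_add_four_pos x
  have h := (((hasDerivAt_id x).mul ((hasDerivAt_pow 2 x).add_const 6)).div
    (((hasDerivAt_sqrt_sq_add_four x).pow 3).const_mul 2)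
      (mul_ne_zero two_ne_zero (pow_ne_zero 3 hq.ne'))).const_add (1 / 2)
  refine h.congr_deriv ?_
  simp only [id, Pi.pow_apply, Pi.mul_apply, Nat.cast_ofNat, Nat.add_one_sub_one, pow_one,
    tFourPDF]
  field_simp
  linear_combination (3 * x ^ 2 + 6) * sq_sqrt_sq_add_four x

theorem tendsto_tFourCDF_atTop : Tendsto tFourCDF atTop (𝓝 1) := by
  have h := (tendsto_div_sqrt_sq_add_four_atTop.mul
    ((tendsto_inv_sqrt_sq_add_four_atTop.pow 2).const_add (1 / 2))).const_add (1 / 2)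
  rw [show (1 / 2 : ℝ) + 1 * (1 / 2 + 0 ^ 2) = 1 by norm_num] at h
  refine h.congr fun x => ?_
  have hq := sqrt_sq_add_four_pos x
  rw [tFourCDF]
  field_simp
  rw [sq_sqrt_sq_add_four]; ring

theorem integral_Iic_tFourPDF (x : ℝ) : ∫ t in Iic x, tFourPDF t = tFourCDF x := by
  have h := integral_Ioi_of_hasDerivAt_of_nonneg' (a := -x) (fun t _ => hasDerivAt_tFourCDF t)
    (fun t _ => (tFourPDF_pos t).le) tendsto_tFourCDF_atTop
  rw [← neg_neg x, ← integral_comp_neg_Ioi]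
  simp only [tFourPDF_neg, h, tFourCDF_neg]

theorem tFourCDF_mul_one_sub (x : ℝ) :
    tFourCDF x * (1 - tFourCDF x) = (3 * x ^ 2 + 16) / (x ^ 2 + 4) ^ 3 := by
  have hq := sqrt_sq_add_four_pos x
  have hq6 : √(x ^ 2 + 4) ^ 6 = (x ^ 2 + 4) ^ 3 := by
    rw [show 6 = 2 * 3 by rfl, pow_mul, sq_sqrt_sq_add_four]
  calc tFourCDF x * (1 - tFourCDF x)
        = 1 / 4 - (x * (x ^ 2 + 6)) ^ 2 / (4 * √(x ^ 2 + 4) ^ 6) := by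
        rw [tFourCDF]; field_simp; ring
    _ = (3 * x ^ 2 + 16) / (x ^ 2 + 4) ^ 3 := by
        rw [hq6]; field_simp; ring

def tFourTail (x : ℝ) : ℝ :=
  (√(x ^ 2 + 4) - x) / 2 - 1 / √(x ^ 2 + 4)
    + (15 / 32 * (x / (x ^ 2 + 4)) + x / (x ^ 2 + 4) ^ 2 / 4 + 15 / 64 * (arctan (x / 2) - π / 2))

theorem hasDerivAt_tFourTail (x : ℝ) : HasDerivAt tFourTail (-(1 - tFourCDF x) ^ 2) x := by
  have hq := sqrt_sq_add_four_pos x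
  have hr : x ^ 2 + 4 ≠ 0 := by positivity
  have hsqrt : HasDerivAt (fun x => (√(x ^ 2 + 4) - x) / 2 - 1 / √(x ^ 2 + 4))
      (tFourCDF x - 1) x := by
    have h := (((hasDerivAt_sqrt_sq_add_four x).sub (hasDerivAt_id' x)).div_const 2).sub
      ((hasDerivAt_const x (1 : ℝ)).div (hasDerivAt_sqrt_sq_add_four x) hq.ne')
    refine h.congr_deriv ?_
    rw [tFourCDF]
    field_simp
    linear_combination x * sq_sqrt_sq_add_four x
  have hrational : HasDerivAt (fun x => 15 / 32 * (x / (x ^ 2 + 4)) + x / (x ^ 2 + 4) ^ 2 / 4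
      + 15 / 64 * (arctan (x / 2) - π / 2)) ((3 * x ^ 2 + 16) / (x ^ 2 + 4) ^ 3) x := by
    have hr' := (hasDerivAt_pow 2 x).add_const 4
    have h := ((((hasDerivAt_id x).div hr' hr).const_mul (15 / 32)).add
      ((((hasDerivAt_id x).div (hr'.pow 2) (pow_ne_zero 2 hr)).div_const 4))).add
      ((((hasDerivAt_id x).div_const 2).arctan.sub_const (π / 2)).const_mul (15 / 64))
    refine h.congr_deriv ?_
    simp only [id, Pi.pow_apply, Nat.cast_ofNat, Nat.add_one_sub_one, pow_one]
    field_simp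
    ring
  refine (hsqrt.add hrational).congr_deriv ?_
  rw [← tFourCDF_mul_one_sub]
  ring

theorem tendsto_tFourTail_atTop : Tendsto tFourTail atTop (𝓝 0) := by
  have hsqrt := (tendsto_sqrt_sq_add_four_sub_atTop.div_const 2).sub
    tendsto_inv_sqrt_sq_add_four_atTop
  have hquartic : Tendsto (fun x : ℝ => x / (x ^ 2 + 4) ^ 2) atTop (𝓝 0) := by
    have h := tendsto_div_sq_add_four_atTop.mul (tendsto_inv_sqrt_sq_add_four_atTop.pow 2)
    rw [zero_mul] at h
    refine h.congr fun x => ?_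
    have := sqrt_sq_add_four_pos x
    field_simp
    rw [sq_sqrt_sq_add_four]
  have harctan : Tendsto (fun x => arctan (x / 2) - π / 2) atTop (𝓝 0) := by
    rw [← sub_self (π / 2)]
    exact ((tendsto_arctan_atTop.mono_right nhdsWithin_le_nhds).comp
      (tendsto_id.atTop_div_const two_pos)).sub_const _
  have h := hsqrt.add (((tendsto_div_sq_add_four_atTop.const_mul (15 / 32)).add
    (hquartic.div_const 4)).add (harctan.const_mul (15 / 64)))
  simp only [zero_div, sub_zero, mul_zero, add_zero] at h
  exact h

theorem integrableOn_Ioi_one_sub_tFourCDF_sq (a : ℝ) :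
    IntegrableOn (fun x => (1 - tFourCDF x) ^ 2) (Ioi a) := by
  simpa using (integrableOn_Ioi_deriv_of_nonpos' (a := a) (fun x _ => hasDerivAt_tFourTail x)
    (fun x _ => by simp only [neg_nonpos]; positivity) tendsto_tFourTail_atTop).neg

theorem integral_Ioi_one_sub_tFourCDF_sq (a : ℝ) :
    ∫ x in Ioi a, (1 - tFourCDF x) ^ 2 = tFourTail a := by
  have h := integral_Ioi_of_hasDerivAt_of_nonpos' (a := a) (fun x _ => hasDerivAt_tFourTail x)
    (fun x _ => by simp only [neg_nonpos]; positivity) tendsto_tFourTail_atTop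
  rw [integral_neg] at h
  linarith

theorem tFourTail_neg_add (x : ℝ) :
    tFourTail (-x) + tFourTail x = √(x ^ 2 + 4) - 2 / √(x ^ 2 + 4) - 15 * π / 64 := by
  simp only [tFourTail, neg_sq, neg_div, arctan_neg]
  ring

theorem crps_tFourCDF (z : ℝ) :
    crps tFourCDF z
      = z * (2 * tFourCDF z - 1) + 2 * (z ^ 2 + 4) / 3 * tFourPDF z - 15 * π / 64 := by
  rw [crps_eq_of_symmetric tFourCDF_neg integrableOn_Ioi_one_sub_tFourCDF_sq,
    integral_Ioi_one_sub_tFourCDF_sq, integral_Ioi_one_sub_tFourCDF_sq, tFourTail_neg_add,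
    tFourCDF, tFourPDF]
  have hq := sqrt_sq_add_four_pos z
  field_simp
  linear_combination 192 * (√(z ^ 2 + 4) ^ 4 + (z ^ 2 + 2) * √(z ^ 2 + 4) ^ 2 + 8) *
    sq_sqrt_sq_add_four z

theorem Gamma_five_div_two : Gamma (5 / 2) = 3 * √π / 4 := by
  have h := Gamma_nat_add_half 2
  norm_num [Nat.doubleFactorial] at h
  exact h

theorem Gamma_seven_div_two : Gamma (7 / 2) = 15 * √π / 8 := by
  have h := Gamma_nat_add_half 3
  norm_num [Nat.doubleFactorial] at h
  exact h

theorem one_add_sq_div_four_rpow (x : ℝ) :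
    (1 + x ^ 2 / 4) ^ (-(5:ℝ) / 2) = 32 / √(x ^ 2 + 4) ^ 5 := by
  have hb : 0 ≤ √(x ^ 2 + 4) / 2 := by positivity
  have hbase : 1 + x ^ 2 / 4 = (√(x ^ 2 + 4) / 2) ^ (2:ℝ) := by
    rw [rpow_two, div_pow, sq_sqrt_sq_add_four]; ring
  rw [hbase, ← rpow_mul hb, show (2:ℝ) * (-5 / 2) = -(5:ℕ) by norm_num, rpow_neg hb,
    rpow_natCast]
  have := sqrt_sq_add_four_pos x
  field_simp
  ring

theorem gamma_div_mul_rpow_eq_tFourPDF (x : ℝ) :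
    Gamma (5 / 2) / (2 * √π * Gamma 2) * (1 + x ^ 2 / 4) ^ (-(5:ℝ) / 2) = tFourPDF x := by
  have := sqrt_sq_add_four_pos x
  have := sqrt_pos.2 pi_pos
  rw [one_add_sq_div_four_rpow, Gamma_five_div_two, Gamma_two, tFourPDF]
  field_simp
  ring

/-- Closed form of the CRPS for the location-scale `t` distribution with 4 degrees of freedom:
`CRPS(F,y) = σz[2F₄*(z)-1] + 2[(4σ²+(y-μ)²)/(3σ)]f₄*(z) - 4σB(1/2,7/2)/(3B(1/2,2)²)`
with `z = (y-μ)/σ`. -/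
theorem stmt18 (μ σ y : ℝ) (hσ : 0 < σ)
    (f F : ℝ → ℝ) (B : ℝ → ℝ → ℝ)
    (hf : ∀ x, f x = Real.Gamma (5/2) / (2 * Real.sqrt π * Real.Gamma 2) *
        (1 + x^2/4) ^ (-(5:ℝ)/2))
    (hF : ∀ x, F x = ∫ t in Set.Iic x, f t)
    (hB : ∀ a b, B a b = Real.Gamma a * Real.Gamma b / Real.Gamma (a + b)) :
    (∫ t : ℝ, (F ((t - μ)/σ) - Set.indicator (Set.Ici y) (fun _ => (1:ℝ)) t) ^ 2)
      = σ * ((y - μ)/σ) * (2 * F ((y - μ)/σ) - 1)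
        + 2 * ((4*σ^2 + (y - μ)^2) / (3*σ)) * f ((y - μ)/σ)
        - 4 * σ * B (1/2) (7/2) / (3 * B (1/2) 2 ^ 2) := by
  obtain rfl : f = tFourPDF := funext fun x => (hf x).trans (gamma_div_mul_rpow_eq_tFourPDF x)
  obtain rfl : F = tFourCDF := funext fun x => (hF x).trans (integral_Iic_tFourPDF x)
  have hπ := sqrt_pos.2 pi_pos
  have hB₁ : B (1 / 2) (7 / 2) = 5 * π / 16 := by
    rw [hB, Gamma_one_half_eq, Gamma_seven_div_two, show (1 / 2 : ℝ) + 7 / 2 = 4 by norm_num,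
      Gamma_ofNat_eq_factorial 3]
    field_simp
    rw [sq_sqrt pi_pos.le]
    norm_num [Nat.factorial]
    ring
  have hB₂ : B (1 / 2) 2 = 4 / 3 := by
    rw [hB, Gamma_one_half_eq, Gamma_two, show (1 / 2 : ℝ) + 2 = 5 / 2 by norm_num,
      Gamma_five_div_two]
    field_simp
  change crps (fun t => tFourCDF ((t - μ) / σ)) y = _
  rw [crps_comp_affine _ _ hσ, crps_tFourCDF, hB₁, hB₂]
  field_simp
  ring
end
end
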